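/- arXiv:0906.4387 — 2 statements merged into one kernel-verified Lean document; each statement's English description precedes it below -/
import Mathlib

section
/- Entropy sum-difference inequality: if X and Y are independent G-valued discrete random variables, then H(X+Y) ≤ 3·H(X−Y) − H(X) − H(Y). -/
open Real
open scoped BigOperators Pointwise Classical

/-- A finitely supported probability space. -/
structure FinProb (Ω : Type*) [Fintype Ω] where
  p : Ω → ℝ
  nonneg : ∀ ω, 0 ≤ p ω
  sum_one : ∑ ω, p ω = 1

/-- Probability that the random variable `X` takes the value `s`. -/
noncomputable def prob {Ω S : Type*} [Fintype Ω] (μ : FinProb Ω) (X : Ω → S) (s : S) : ℝ :=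
  ∑ ω, if X ω = s then μ.p ω else 0

/-- Shannon entropy of a discrete random variable. -/
noncomputable def entropy {Ω S : Type*} [Fintype Ω] (μ : FinProb Ω) (X : Ω → S) : ℝ :=
  ∑ s ∈ Finset.univ.image X, Real.negMulLog (prob μ X s)

/-- Conditional Shannon entropy `H(X|Y) = H(X,Y) - H(Y)`. -/
noncomputable def condEntropy {Ω S T : Type*} [Fintype Ω] (μ : FinProb Ω)
    (X : Ω → S) (Y : Ω → T) : ℝ :=
  entropy μ (fun ω => (X ω, Y ω)) - entropy μ Y

/-- The essential range of a random variable: values attained with positive probability. -/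
noncomputable def rangeF {Ω S : Type*} [Fintype Ω] (μ : FinProb Ω) (X : Ω → S) : Finset S :=
  (Finset.univ.image X).filter (fun s => prob μ X s ≠ 0)

/-- Two random variables (on possibly different spaces) have the same distribution. -/
def IdentDist {Ω Ω' S : Type*} [Fintype Ω] [Fintype Ω'] (μ : FinProb Ω) (X : Ω → S)
    (μ' : FinProb Ω') (Y : Ω' → S) : Prop :=
  ∀ s, prob μ X s = prob μ' Y s

/-- Independence of two random variables. -/
def IndepRV {Ω S T : Type*} [Fintype Ω] (μ : FinProb Ω) (X : Ω → S) (Y : Ω → T) : Prop :=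
  ∀ s t, prob μ (fun ω => (X ω, Y ω)) (s, t) = prob μ X s * prob μ Y t

/-- Joint independence of a finite family of random variables. -/
def IndepFam {Ω ι : Type*} [Fintype Ω] [Fintype ι] {S : ι → Type*}
    (μ : FinProb Ω) (X : ∀ i, Ω → S i) : Prop :=
  ∀ f : ∀ i, S i, prob μ (fun ω i => X i ω) f = ∏ i, prob μ (X i) (f i)

/-- `X` and `Y` are conditionally independent given `W`. -/
def CondIndepGiven {Ω S T U : Type*} [Fintype Ω] (μ : FinProb Ω)
    (X : Ω → S) (Y : Ω → T) (W : Ω → U) : Prop :=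
  ∀ s t u, prob μ (fun ω => (X ω, Y ω, W ω)) (s, t, u) * prob μ W u
    = prob μ (fun ω => (X ω, W ω)) (s, u) * prob μ (fun ω => (Y ω, W ω)) (t, u)

/-- `Y` is determined by `X` (almost surely). -/
def Determines {Ω S T : Type*} [Fintype Ω] (μ : FinProb Ω) (X : Ω → S) (Y : Ω → T) : Prop :=
  ∃ f : S → T, ∀ ω, μ.p ω ≠ 0 → Y ω = f (X ω)

/-- The entropy transport distance between the distributions of `X` and `Y`:
the infimum of `H(Z)` over random variables `Z` (coupled with a copy `X'` of `X`)
such that `X' + Z` is distributed as `Y`. -/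
noncomputable def transDist {Ω₁ Ω₂ G : Type*} [Fintype Ω₁] [Fintype Ω₂] [AddCommGroup G]
    (μ : FinProb Ω₁) (X : Ω₁ → G) (ν : FinProb Ω₂) (Y : Ω₂ → G) : ℝ :=
  sInf {h : ℝ | ∃ (n : ℕ) (μ' : FinProb (Fin n)) (X' Z : Fin n → G),
    IdentDist μ' X' μ X ∧ IdentDist μ' (fun ω => X' ω + Z ω) ν Y ∧ entropy μ' Z = h}

/-- Conditioning a finitely supported probability space on an event `E`
(returning `μ` unchanged if `E` has zero probability). -/
noncomputable def condFinProb {Ω : Type*} [Fintype Ω] (μ : FinProb Ω) (E : Ω → Prop) :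
    FinProb Ω :=
  if h : 0 < ∑ ω, if E ω then μ.p ω else 0 then
    { p := fun ω => if E ω then μ.p ω / (∑ ω', if E ω' then μ.p ω' else 0) else 0
      nonneg := fun ω => by
        split
        · exact div_nonneg (μ.nonneg ω) h.le
        · exact le_refl 0
      sum_one := by
        have h' : ∀ ω, (if E ω then μ.p ω / (∑ ω', if E ω' then μ.p ω' else 0) else 0)
            = (if E ω then μ.p ω else 0) / (∑ ω', if E ω' then μ.p ω' else 0) := by
          intro ω; split <;> simp
        rw [Finset.sum_congr rfl (fun ω _ => h' ω), ← Finset.sum_div, div_self h.ne'] }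
  else μ

/-! Let `Y'` be an independent copy of `Y`, realised on the product space `μ ⊗ μ`. Subtracting
an independent variable cannot lower entropy, so `H(X+Y) ≤ H(X+Y-Y')`. Submodularity of entropy
applied to `(X-Y', Y-Y', X+Y-Y')` bounds this by `H(X-Y') + H(Y-Y') - H(Y')`, and the entropic
Ruzsa triangle inequality `H(Y-Y') ≤ H(Y-X) + H(X-Y') - H(X)` finishes the proof, since `X-Y'`
and `Y-X` have the distributions of `X-Y` and `-(X-Y)`. -/

open Finset

section Entropy

variable {Ω S T U : Type*} [Fintype Ω] (μ : FinProb Ω)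

theorem prob_nonneg (W : Ω → S) (s : S) : 0 ≤ prob μ W s :=
  sum_nonneg fun ω _ => by split_ifs <;> simp [μ.nonneg ω]

theorem FinProb.p_le_prob (W : Ω → S) (ω : Ω) : μ.p ω ≤ prob μ W (W ω) := by
  have := single_le_sum (f := fun ω' => if W ω' = W ω then μ.p ω' else 0)
    (fun ω' _ => by split_ifs <;> simp [μ.nonneg ω']) (mem_univ ω)
  rwa [if_pos rfl] at this

theorem prob_pos_of_p_ne_zero (W : Ω → S) {ω : Ω} (hω : μ.p ω ≠ 0) : 0 < prob μ W (W ω) :=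
  ((μ.nonneg ω).lt_of_ne' hω).trans_le (μ.p_le_prob W ω)

theorem prob_le_prob_of_ae_eq_comp {W : Ω → S} {V : Ω → T} {f : S → T}
    (hf : ∀ ω, μ.p ω ≠ 0 → V ω = f (W ω)) (s : S) : prob μ W s ≤ prob μ V (f s) :=
  sum_le_sum fun ω _ => by
    rcases eq_or_ne (μ.p ω) 0 with h0 | h0
    · simp [h0]
    by_cases h : W ω = s
    · simp [h, hf ω h0]
    · simp only [h, if_false]; split_ifs <;> simp [μ.nonneg ω]

theorem prob_congr_of_iff {W : Ω → S} {V : Ω → T} {s : S} {t : T}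
    (h : ∀ ω, W ω = s ↔ V ω = t) : prob μ W s = prob μ V t :=
  sum_congr rfl fun ω _ => if_congr (h ω) rfl rfl

theorem sum_p_mul_comp (W : Ω → S) {F : Finset S} (hF : ∀ ω, W ω ∈ F) (f : S → ℝ) :
    ∑ ω, μ.p ω * f (W ω) = ∑ s ∈ F, prob μ W s * f s := by
  simp only [prob, sum_mul, ite_mul, zero_mul]
  rw [sum_comm]
  refine sum_congr rfl fun ω _ => ?_
  rw [sum_ite_eq, if_pos (hF ω)]

theorem prob_eq_sum_p_mul (W : Ω → S) (s : S) :
    prob μ W s = ∑ ω, μ.p ω * if W ω = s then 1 else 0 := by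
  simp only [prob, mul_ite, mul_one, mul_zero]

theorem prob_comp_eq_sum (W : Ω → S) {F : Finset S} (hF : ∀ ω, W ω ∈ F) (g : S → T) (t : T) :
    prob μ (fun ω => g (W ω)) t = ∑ s ∈ F, prob μ W s * if g s = t then 1 else 0 := by
  rw [← sum_p_mul_comp μ W hF, prob_eq_sum_p_mul]

theorem sum_prob (W : Ω → S) {F : Finset S} (hF : ∀ ω, W ω ∈ F) : ∑ s ∈ F, prob μ W s = 1 := by
  simpa [μ.sum_one] using (sum_p_mul_comp μ W hF fun _ => 1).symm

theorem entropy_eq_sum_p_mul_neg_log (W : Ω → S) :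
    entropy μ W = ∑ ω, μ.p ω * -log (prob μ W (W ω)) := by
  rw [sum_p_mul_comp μ W (fun ω => mem_image_of_mem W (mem_univ ω)) fun s => -log (prob μ W s)]
  simp only [entropy, negMulLog, neg_mul, mul_neg]

theorem entropy_eq_sum_negMulLog (W : Ω → S) {F : Finset S} (hF : ∀ ω, W ω ∈ F) :
    entropy μ W = ∑ s ∈ F, negMulLog (prob μ W s) := by
  rw [entropy_eq_sum_p_mul_neg_log, sum_p_mul_comp μ W hF fun s => -log (prob μ W s)]
  simp only [negMulLog, neg_mul, mul_neg]

theorem Determines.entropy_le {W : Ω → S} {V : Ω → T} (h : Determines μ W V) :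
    entropy μ V ≤ entropy μ W := by
  obtain ⟨f, hf⟩ := h
  rw [entropy_eq_sum_p_mul_neg_log, entropy_eq_sum_p_mul_neg_log]
  refine sum_le_sum fun ω _ => ?_
  rcases eq_or_ne (μ.p ω) 0 with h0 | h0
  · simp [h0]
  refine mul_le_mul_of_nonneg_left (neg_le_neg (log_le_log (prob_pos_of_p_ne_zero μ W h0) ?_))
    (μ.nonneg ω)
  rw [hf ω h0]
  exact prob_le_prob_of_ae_eq_comp μ hf _

theorem entropy_eq_of_determines {W : Ω → S} {V : Ω → T} (hWV : Determines μ W V)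
    (hVW : Determines μ V W) : entropy μ V = entropy μ W :=
  (hWV.entropy_le μ).antisymm (hVW.entropy_le μ)

theorem prob_eq_sum_prob_pair (A : Ω → S) (C : Ω → U) {F : Finset S} (hF : ∀ ω, A ω ∈ F)
    (c : U) : prob μ C c = ∑ a ∈ F, prob μ (fun ω => (A ω, C ω)) (a, c) := by
  simp only [prob, Prod.mk.injEq, ite_and]
  rw [sum_comm]
  exact sum_congr rfl fun ω _ => by rw [sum_ite_eq, if_pos (hF ω)]

-- Gibbs' inequality against a subprobability `q`.
theorem entropy_le_sum_p_mul_neg_log (W : Ω → S) {F : Finset S} (hF : ∀ ω, W ω ∈ F)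
    {q : S → ℝ} (hq : ∀ s, 0 ≤ q s) (hq_pos : ∀ ω, μ.p ω ≠ 0 → 0 < q (W ω))
    (hq_sum : ∑ s ∈ F, q s ≤ 1) :
    entropy μ W ≤ ∑ ω, μ.p ω * -log (q (W ω)) := by
  have hterm : ∀ ω, μ.p ω * -log (prob μ W (W ω)) - μ.p ω * -log (q (W ω))
      ≤ μ.p ω * (q (W ω) / prob μ W (W ω)) - μ.p ω := by
    intro ω
    rcases eq_or_ne (μ.p ω) 0 with h0 | h0
    · simp [h0]
    have hp := prob_pos_of_p_ne_zero μ W h0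
    have hlog := log_le_sub_one_of_pos (div_pos (hq_pos ω h0) hp)
    rw [log_div (hq_pos ω h0).ne' hp.ne'] at hlog
    linarith [mul_le_mul_of_nonneg_left hlog (μ.nonneg ω)]
  have hratio : ∑ s ∈ F, prob μ W s * (q s / prob μ W s) ≤ ∑ s ∈ F, q s :=
    sum_le_sum fun s _ => by
      rcases eq_or_ne (prob μ W s) 0 with h0 | h0
      · simp [h0, hq s]
      · rw [mul_div_cancel₀ _ h0]
  have hsum := sum_le_sum fun ω (_ : ω ∈ univ) => hterm ω
  rw [sum_sub_distrib, sum_sub_distrib, ← entropy_eq_sum_p_mul_neg_log,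
    sum_p_mul_comp μ W hF fun s => q s / prob μ W s, μ.sum_one] at hsum
  linarith

theorem entropy_triple_add_entropy_le (A : Ω → S) (B : Ω → T) (C : Ω → U) :
    entropy μ (fun ω => (A ω, B ω, C ω)) + entropy μ C ≤
      entropy μ (fun ω => (A ω, C ω)) + entropy μ (fun ω => (B ω, C ω)) := by
  set pAC := prob μ (fun ω => (A ω, C ω))
  set pBC := prob μ (fun ω => (B ω, C ω))
  set pC := prob μ C
  have hA : ∀ ω, A ω ∈ univ.image A := by simp
  have hB : ∀ ω, B ω ∈ univ.image B := by simp
  have hC : ∀ ω, C ω ∈ univ.image C := by simp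
  -- Gibbs against the law under which `A` and `B` are conditionally independent given `C`.
  have hq_sum : ∑ x ∈ univ.image A ×ˢ univ.image B ×ˢ univ.image C,
      pAC (x.1, x.2.2) * pBC (x.2.1, x.2.2) / pC x.2.2 ≤ 1 := by
    have hmarg : ∀ c, ∑ b ∈ univ.image B, ∑ a ∈ univ.image A, pAC (a, c) * pBC (b, c) / pC c =
        pC c * pC c / pC c := by
      intro c
      simp_rw [← sum_div, ← sum_mul, ← mul_sum]
      rw [← prob_eq_sum_prob_pair μ A C hA, ← prob_eq_sum_prob_pair μ B C hB]
    rw [sum_product_right, sum_product, sum_comm]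
    simp only [hmarg, mul_self_div_self]
    exact (sum_prob μ C hC).le
  have hpos : ∀ ω, μ.p ω ≠ 0 → 0 < pAC (A ω, C ω) ∧ 0 < pBC (B ω, C ω) ∧ 0 < pC (C ω) :=
    fun ω h0 => ⟨prob_pos_of_p_ne_zero μ (fun ω => (A ω, C ω)) h0,
      prob_pos_of_p_ne_zero μ (fun ω => (B ω, C ω)) h0, prob_pos_of_p_ne_zero μ C h0⟩
  have hgibbs : entropy μ (fun ω => (A ω, B ω, C ω)) ≤
      ∑ ω, μ.p ω * -log (pAC (A ω, C ω) * pBC (B ω, C ω) / pC (C ω)) :=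
    entropy_le_sum_p_mul_neg_log μ _ (fun ω => mem_product.2 ⟨hA ω, mem_product.2 ⟨hB ω, hC ω⟩⟩)
    (q := fun x => pAC (x.1, x.2.2) * pBC (x.2.1, x.2.2) / pC x.2.2)
    (fun x => div_nonneg (mul_nonneg (prob_nonneg μ _ _) (prob_nonneg μ _ _)) (prob_nonneg μ _ _))
    (fun ω h0 => div_pos (mul_pos (hpos ω h0).1 (hpos ω h0).2.1) (hpos ω h0).2.2) hq_sum
  have hsplit : ∀ ω, μ.p ω * -log (pAC (A ω, C ω) * pBC (B ω, C ω) / pC (C ω)) =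
      μ.p ω * -log (pAC (A ω, C ω)) + μ.p ω * -log (pBC (B ω, C ω)) - μ.p ω * -log (pC (C ω)) := by
    intro ω
    rcases eq_or_ne (μ.p ω) 0 with h0 | h0
    · simp [h0]
    obtain ⟨hAC, hBC, hC⟩ := hpos ω h0
    rw [log_div (mul_pos hAC hBC).ne' hC.ne', log_mul hAC.ne' hBC.ne']
    ring
  rw [sum_congr rfl fun ω _ => hsplit ω, sum_sub_distrib, sum_add_distrib] at hgibbs
  rw [entropy_eq_sum_p_mul_neg_log μ (fun ω => (A ω, C ω)),
    entropy_eq_sum_p_mul_neg_log μ (fun ω => (B ω, C ω)), entropy_eq_sum_p_mul_neg_log μ C]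
  linarith

theorem entropy_const (u : U) : entropy μ (fun _ => u) = 0 := by
  have h := sum_prob μ (fun _ => u) (F := {u}) fun _ => mem_singleton_self u
  rw [sum_singleton] at h
  rw [entropy_eq_sum_negMulLog μ _ (F := {u}) fun _ => mem_singleton_self u, sum_singleton, h,
    negMulLog_one]

theorem entropy_pair_le (A : Ω → S) (B : Ω → T) :
    entropy μ (fun ω => (A ω, B ω)) ≤ entropy μ A + entropy μ B := by
  have h := entropy_triple_add_entropy_le μ A B fun _ => ()
  have hAB : entropy μ (fun ω => (A ω, B ω, ())) = entropy μ (fun ω => (A ω, B ω)) :=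
    entropy_eq_of_determines μ ⟨fun x => (x.1, x.2, ()), fun _ _ => rfl⟩
      ⟨fun x => (x.1, x.2.1), fun _ _ => rfl⟩
  have hA : entropy μ (fun ω => (A ω, ())) = entropy μ A :=
    entropy_eq_of_determines μ ⟨fun x => (x, ()), fun _ _ => rfl⟩ ⟨Prod.fst, fun _ _ => rfl⟩
  have hB : entropy μ (fun ω => (B ω, ())) = entropy μ B :=
    entropy_eq_of_determines μ ⟨fun x => (x, ()), fun _ _ => rfl⟩ ⟨Prod.fst, fun _ _ => rfl⟩
  rwa [entropy_const, add_zero, hAB, hA, hB] at h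

section IdentDist

variable {Ω' : Type*} [Fintype Ω'] {μ} {μ' : FinProb Ω'} {W : Ω → S} {W' : Ω' → S}

theorem IdentDist.entropy_eq (h : IdentDist μ W μ' W') : entropy μ W = entropy μ' W' := by
  have hF : ∀ ω, W ω ∈ univ.image W ∪ univ.image W' := by simp
  have hF' : ∀ ω, W' ω ∈ univ.image W ∪ univ.image W' := by simp
  rw [entropy_eq_sum_negMulLog μ W hF, entropy_eq_sum_negMulLog μ' W' hF']
  exact sum_congr rfl fun s _ => by rw [h s]

theorem IdentDist.comp (h : IdentDist μ W μ' W') (g : S → T) :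
    IdentDist μ (fun ω => g (W ω)) μ' (fun ω => g (W' ω)) := by
  have hF : ∀ ω, W ω ∈ univ.image W ∪ univ.image W' := by simp
  have hF' : ∀ ω, W' ω ∈ univ.image W ∪ univ.image W' := by simp
  intro t
  rw [prob_comp_eq_sum μ W hF, prob_comp_eq_sum μ' W' hF']
  exact sum_congr rfl fun s _ => by rw [h s]

end IdentDist

end Entropy

section Independence

variable {Ω S T U S' T' : Type*} [Fintype Ω] (μ : FinProb Ω) {X : Ω → S} {Y : Ω → T}

def IndepRV₃ (A : Ω → S) (B : Ω → T) (C : Ω → U) : Prop :=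
  ∀ a b c, prob μ (fun ω => (A ω, B ω, C ω)) (a, b, c) = prob μ A a * prob μ B b * prob μ C c

variable {μ}

theorem IndepRV.symm (h : IndepRV μ X Y) : IndepRV μ Y X := fun t s => by
  rw [mul_comm, ← h s t]
  exact prob_congr_of_iff μ fun ω => by simp only [Prod.mk.injEq, and_comm]

theorem IndepRV.comp (h : IndepRV μ X Y) (f : S → S') (g : T → T') :
    IndepRV μ (fun ω => f (X ω)) (fun ω => g (Y ω)) := by
  intro u v
  have hX : ∀ ω, X ω ∈ univ.image X := by simp
  have hY : ∀ ω, Y ω ∈ univ.image Y := by simp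
  rw [prob_comp_eq_sum μ (fun ω => (X ω, Y ω)) (F := univ.image X ×ˢ univ.image Y)
      (fun ω => mem_product.2 ⟨hX ω, hY ω⟩) (fun x => (f x.1, g x.2)) (u, v),
    prob_comp_eq_sum μ X hX f u, prob_comp_eq_sum μ Y hY g v, sum_product, sum_mul_sum]
  refine sum_congr rfl fun s _ => sum_congr rfl fun t _ => ?_
  rw [h s t]
  simp only [Prod.mk.injEq, ite_and]
  split_ifs <;> ring

theorem IndepRV.entropy_pair (h : IndepRV μ X Y) :
    entropy μ (fun ω => (X ω, Y ω)) = entropy μ X + entropy μ Y := by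
  rw [entropy_eq_sum_p_mul_neg_log, entropy_eq_sum_p_mul_neg_log μ X,
    entropy_eq_sum_p_mul_neg_log μ Y, ← sum_add_distrib]
  refine sum_congr rfl fun ω _ => ?_
  rcases eq_or_ne (μ.p ω) 0 with h0 | h0
  · simp [h0]
  rw [h (X ω) (Y ω), log_mul (prob_pos_of_p_ne_zero μ X h0).ne'
    (prob_pos_of_p_ne_zero μ Y h0).ne']
  ring

theorem IndepRV.identDist_pair {Ω' : Type*} [Fintype Ω'] {μ' : FinProb Ω'} {X' : Ω' → S}
    {Y' : Ω' → T} (h : IndepRV μ X Y) (h' : IndepRV μ' X' Y') (hX : IdentDist μ X μ' X')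
    (hY : IdentDist μ Y μ' Y') :
    IdentDist μ (fun ω => (X ω, Y ω)) μ' (fun ω => (X' ω, Y' ω))
  | (s, t) => by rw [h s t, h' s t, hX s, hY t]

namespace IndepRV₃

variable {A : Ω → S} {B : Ω → T} {C : Ω → U}

theorem swap_left (h : IndepRV₃ μ A B C) : IndepRV₃ μ B A C := fun b a c => by
  rw [mul_comm (prob μ B b), ← h a b c]
  exact prob_congr_of_iff μ fun ω => by simp only [Prod.mk.injEq, and_left_comm]

theorem swap_right (h : IndepRV₃ μ A B C) : IndepRV₃ μ A C B := fun a c b => by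
  rw [mul_right_comm, ← h a b c]
  exact prob_congr_of_iff μ fun ω => by simp only [Prod.mk.injEq, and_comm]

theorem indepRV_snd_thd (h : IndepRV₃ μ A B C) : IndepRV μ B C := fun b c => by
  rw [prob_eq_sum_prob_pair μ A (fun ω => (B ω, C ω)) (F := univ.image A) (by simp)]
  simp only [h _ b c, mul_assoc, ← sum_mul, sum_prob μ A (F := univ.image A) (by simp), one_mul]

theorem indepRV_fst_pair (h : IndepRV₃ μ A B C) : IndepRV μ A (fun ω => (B ω, C ω))
  | a, (b, c) => by rw [h.indepRV_snd_thd b c, ← mul_assoc]; exact h a b c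

theorem indepRV_fst_snd (h : IndepRV₃ μ A B C) : IndepRV μ A B :=
  h.swap_right.swap_left.indepRV_snd_thd

theorem indepRV_fst_thd (h : IndepRV₃ μ A B C) : IndepRV μ A C := h.swap_left.indepRV_snd_thd

theorem entropy_triple (h : IndepRV₃ μ A B C) :
    entropy μ (fun ω => (A ω, B ω, C ω)) = entropy μ A + entropy μ B + entropy μ C := by
  rw [h.indepRV_fst_pair.entropy_pair, h.indepRV_snd_thd.entropy_pair, add_assoc]

end IndepRV₃

end Independence

section AddCommGroup

variable {Ω G : Type*} [Fintype Ω] [AddCommGroup G] {μ : FinProb Ω} {A B C : Ω → G}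

theorem entropy_sub_comm (A B : Ω → G) :
    entropy μ (fun ω => A ω - B ω) = entropy μ (fun ω => B ω - A ω) :=
  entropy_eq_of_determines μ ⟨Neg.neg, fun _ _ => (neg_sub _ _).symm⟩
    ⟨Neg.neg, fun _ _ => (neg_sub _ _).symm⟩

theorem IndepRV.entropy_le_entropy_sub (h : IndepRV μ A B) :
    entropy μ A ≤ entropy μ (fun ω => A ω - B ω) := by
  have hshear : entropy μ (fun ω => (A ω - B ω, B ω)) = entropy μ (fun ω => (A ω, B ω)) :=
    entropy_eq_of_determines μ ⟨fun x => (x.1 - x.2, x.2), fun _ _ => rfl⟩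
      ⟨fun x => (x.1 + x.2, x.2), fun _ _ => by simp⟩
  have := entropy_pair_le μ (fun ω => A ω - B ω) B
  rw [hshear, h.entropy_pair] at this
  linarith

theorem IndepRV₃.entropy_add_sub_le (h : IndepRV₃ μ A B C) :
    entropy μ (fun ω => A ω + B ω - C ω) ≤
      entropy μ (fun ω => A ω - C ω) + entropy μ (fun ω => B ω - C ω) - entropy μ C := by
  have hsub := entropy_triple_add_entropy_le μ (fun ω => A ω - C ω) (fun ω => B ω - C ω)
    (fun ω => A ω + B ω - C ω)
  have htriple : entropy μ (fun ω => (A ω, B ω, C ω)) ≤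
      entropy μ (fun ω => (A ω - C ω, B ω - C ω, A ω + B ω - C ω)) :=
    Determines.entropy_le μ ⟨fun x => (x.2.2 - x.2.1, x.2.2 - x.1, x.2.2 - x.1 - x.2.1),
      fun _ _ => by simp⟩
  have hAC_B : IndepRV μ (fun ω => A ω - C ω) B :=
    (h.swap_left.indepRV_fst_pair.comp id fun x => x.1 - x.2).symm
  have hBC_A : IndepRV μ (fun ω => B ω - C ω) A :=
    (h.indepRV_fst_pair.comp id fun x => x.1 - x.2).symm
  have hAC : entropy μ (fun ω => (A ω - C ω, A ω + B ω - C ω)) =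
      entropy μ (fun ω => A ω - C ω) + entropy μ B := by
    rw [← hAC_B.entropy_pair]
    exact entropy_eq_of_determines μ ⟨fun x => (x.1, x.1 + x.2), fun _ _ => by simp; abel⟩
      ⟨fun x => (x.1, x.2 - x.1), fun _ _ => by simp⟩
  have hBC : entropy μ (fun ω => (B ω - C ω, A ω + B ω - C ω)) =
      entropy μ (fun ω => B ω - C ω) + entropy μ A := by
    rw [← hBC_A.entropy_pair]
    exact entropy_eq_of_determines μ ⟨fun x => (x.1, x.1 + x.2), fun _ _ => by simp; abel⟩
      ⟨fun x => (x.1, x.2 - x.1), fun _ _ => by simp⟩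
  rw [h.entropy_triple] at htriple
  linarith

theorem IndepRV₃.entropy_sub_le (h : IndepRV₃ μ A B C) :
    entropy μ (fun ω => A ω - C ω) ≤
      entropy μ (fun ω => A ω - B ω) + entropy μ (fun ω => B ω - C ω) - entropy μ B := by
  have hsub := entropy_triple_add_entropy_le μ (fun ω => A ω - B ω) C (fun ω => A ω - C ω)
  have htriple : entropy μ (fun ω => (A ω, B ω, C ω)) ≤
      entropy μ (fun ω => (A ω - B ω, C ω, A ω - C ω)) :=
    Determines.entropy_le μ ⟨fun x => (x.2.2 + x.2.1, x.2.2 + x.2.1 - x.1, x.2.1),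
      fun _ _ => by simp⟩
  have hAC : entropy μ (fun ω => (A ω - B ω, A ω - C ω)) ≤
      entropy μ (fun ω => A ω - B ω) + entropy μ (fun ω => B ω - C ω) := by
    have hshear : entropy μ (fun ω => (A ω - B ω, A ω - C ω)) =
        entropy μ (fun ω => (A ω - B ω, B ω - C ω)) :=
      entropy_eq_of_determines μ ⟨fun x => (x.1, x.1 + x.2), fun _ _ => by simp⟩
        ⟨fun x => (x.1, x.2 - x.1), fun _ _ => by simp⟩
    exact hshear ▸ entropy_pair_le μ _ _
  have hCA : entropy μ (fun ω => (C ω, A ω - C ω)) = entropy μ C + entropy μ A := by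
    rw [← h.indepRV_fst_thd.symm.entropy_pair]
    exact entropy_eq_of_determines μ ⟨fun x => (x.1, x.2 - x.1), fun _ _ => by simp⟩
      ⟨fun x => (x.1, x.2 + x.1), fun _ _ => by simp⟩
  rw [h.entropy_triple] at htriple
  linarith

theorem IndepRV₃.entropy_add_le (h : IndepRV₃ μ A B C) :
    entropy μ (fun ω => A ω + B ω) ≤ 2 * entropy μ (fun ω => A ω - C ω) +
      entropy μ (fun ω => B ω - A ω) - entropy μ A - entropy μ C := by
  have hC : IndepRV μ (fun ω => A ω + B ω) C :=
    (h.swap_right.swap_left.indepRV_fst_pair.comp id fun x => x.1 + x.2).symm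
  linarith [hC.entropy_le_entropy_sub, h.entropy_add_sub_le, h.swap_left.entropy_sub_le]

end AddCommGroup

section Product

variable {Ω₁ Ω₂ S T U : Type*} [Fintype Ω₁] [Fintype Ω₂] (μ : FinProb Ω₁) (ν : FinProb Ω₂)

def FinProb.prod : FinProb (Ω₁ × Ω₂) where
  p ω := μ.p ω.1 * ν.p ω.2
  nonneg ω := mul_nonneg (μ.nonneg _) (ν.nonneg _)
  sum_one := by rw [Fintype.sum_prod_type, ← sum_mul_sum, μ.sum_one, ν.sum_one, one_mul]

theorem prob_prod_pair (V : Ω₁ → S) (W : Ω₂ → T) (s : S) (t : T) :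
    prob (μ.prod ν) (fun ω => (V ω.1, W ω.2)) (s, t) = prob μ V s * prob ν W t := by
  simp only [prob, FinProb.prod, Fintype.sum_prod_type, sum_mul_sum, Prod.mk.injEq, ite_and]
  refine sum_congr rfl fun ω₁ _ => sum_congr rfl fun ω₂ _ => ?_
  split_ifs <;> simp

theorem identDist_prod_fst (V : Ω₁ → S) : IdentDist (μ.prod ν) (fun ω => V ω.1) μ V := fun s => by
  simp only [prob, FinProb.prod, Fintype.sum_prod_type]
  refine sum_congr rfl fun ω₁ _ => ?_
  by_cases h : V ω₁ = s <;> simp [h, ← mul_sum, ν.sum_one]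

theorem identDist_prod_snd (W : Ω₂ → T) : IdentDist (μ.prod ν) (fun ω => W ω.2) ν W := fun t => by
  simp only [prob, FinProb.prod, Fintype.sum_prod_type]
  rw [sum_comm]
  refine sum_congr rfl fun ω₂ _ => ?_
  by_cases h : W ω₂ = t <;> simp [h, ← sum_mul, μ.sum_one]

theorem IndepRV.indepRV₃_prod {X : Ω₁ → S} {Y : Ω₁ → T} (h : IndepRV μ X Y) (Z : Ω₂ → U) :
    IndepRV₃ (μ.prod ν) (fun ω => X ω.1) (fun ω => Y ω.1) (fun ω => Z ω.2) := fun a b c => by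
  have hassoc : prob (μ.prod ν) (fun ω => (X ω.1, Y ω.1, Z ω.2)) (a, b, c) =
      prob (μ.prod ν) (fun ω => ((X ω.1, Y ω.1), Z ω.2)) ((a, b), c) :=
    prob_congr_of_iff _ fun ω => by simp only [Prod.mk.injEq, and_assoc]
  rw [hassoc, prob_prod_pair μ ν (fun ω => (X ω, Y ω)), h a b, identDist_prod_fst μ ν X,
    identDist_prod_fst μ ν Y, identDist_prod_snd μ ν Z]

end Product

/-- entropy sum-difference inequality: for independent `X, Y`,
`H(X+Y) ≤ 3·H(X−Y) − H(X) − H(Y)`. -/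
theorem entropy_sum_le_three_mul_entropy_diff {G Ω : Type*} [AddCommGroup G] [Fintype Ω]
    (μ : FinProb Ω) (X Y : Ω → G) (hindep : IndepRV μ X Y) :
    entropy μ (fun ω => X ω + Y ω) ≤
      3 * entropy μ (fun ω => X ω - Y ω) - entropy μ X - entropy μ Y := by
  set ν := μ.prod μ
  have h : IndepRV₃ ν (fun ω => X ω.1) (fun ω => Y ω.1) (fun ω => Y ω.2) :=
    hindep.indepRV₃_prod μ μ Y
  have hX := identDist_prod_fst μ μ X
  have hY' := identDist_prod_snd μ μ Y
  have hXY := h.indepRV_fst_snd.identDist_pair hindep hX (identDist_prod_fst μ μ Y)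
  have hXY' := h.indepRV_fst_thd.identDist_pair hindep hX hY'
  have hsum : entropy ν (fun ω => X ω.1 + Y ω.1) = entropy μ (fun ω => X ω + Y ω) :=
    (hXY.comp fun x => x.1 + x.2).entropy_eq
  have hdiff : entropy ν (fun ω => Y ω.1 - X ω.1) = entropy μ (fun ω => X ω - Y ω) :=
    (entropy_sub_comm _ _).trans (hXY.comp fun x => x.1 - x.2).entropy_eq
  have hdiff' : entropy ν (fun ω => X ω.1 - Y ω.2) = entropy μ (fun ω => X ω - Y ω) :=
    (hXY'.comp fun x => x.1 - x.2).entropy_eq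
  have key := h.entropy_add_le
  rw [hsum, hdiff, hdiff', hX.entropy_eq, hY'.entropy_eq] at key
  linarith
end

section
/- For x, y > 0, F(x) + F'(x)(y−x) − F(y) = y·log⁺(y/x) + O(x) + O(y), where the implied constants are absolute; here F(x) = x log(1/x), F'(x) = log(1/x) − 1, and log⁺ t = max(log t, 0). In particular the left-hand side is nonnegative. -/
open Real
open scoped BigOperators Pointwise Classical

/-!
Expanding the logarithms, the tangent-line defect is `y log (y/x) + x - y = x · klFun (y/x)`,
the Kullback–Leibler integrand, which is nonnegative because `klFun` is convex with minimum `0`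
at `1`. Removing `y log⁺ (y/x)` leaves `x - y` when `y ≥ x`, and otherwise the defect itself,
which then lies between `0` and `x` because `y log (y/x) ≤ 0`.
-/

open InformationTheory

theorem negMulLog_tangent_defect_eq_mul_klFun {x y : ℝ} (hx : x ≠ 0) (hy : y ≠ 0) :
    negMulLog x + (log (1 / x) - 1) * (y - x) - negMulLog y = x * klFun (y / x) := by
  simp only [negMulLog, klFun_apply, log_div hy hx, one_div, log_inv]
  field_simp
  ring

theorem abs_klFun_sub_mul_max_log_le {t : ℝ} (ht : 0 ≤ t) :
    |klFun t - t * max (log t) 0| ≤ 1 + t := by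
  rcases le_total 0 (log t) with hlog | hlog
  · rw [max_eq_left hlog, klFun_apply, abs_le]
    constructor <;> linarith
  · have hmul : t * log t ≤ 0 := mul_nonpos_of_nonneg_of_nonpos ht hlog
    rw [max_eq_right hlog, mul_zero, sub_zero, abs_of_nonneg (klFun_nonneg ht), klFun_apply]
    linarith

/-- for `x, y > 0`, the tangent-line defect
`F(x) + F'(x)(y−x) − F(y)` (with `F(x) = x·log(1/x)`, `F'(x) = log(1/x) − 1`) is
nonnegative and equals `y·log⁺(y/x)` up to an error of at most `x + y`. -/
theorem tangent_defect_estimate {x y : ℝ} (hx : 0 < x) (hy : 0 < y) :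
    0 ≤ Real.negMulLog x + (Real.log (1 / x) - 1) * (y - x) - Real.negMulLog y ∧
    |Real.negMulLog x + (Real.log (1 / x) - 1) * (y - x) - Real.negMulLog y
        - y * max (Real.log (y / x)) 0| ≤ x + y := by
  rw [negMulLog_tangent_defect_eq_mul_klFun hx.ne' hy.ne']
  have ht : 0 ≤ y / x := by positivity
  refine ⟨mul_nonneg hx.le (klFun_nonneg ht), ?_⟩
  have hfactor : x * klFun (y / x) - y * max (log (y / x)) 0
      = x * (klFun (y / x) - y / x * max (log (y / x)) 0) := by
    rw [mul_sub, ← mul_assoc, mul_div_cancel₀ _ hx.ne']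
  calc |x * klFun (y / x) - y * max (log (y / x)) 0|
      = x * |klFun (y / x) - y / x * max (log (y / x)) 0| := by
        rw [hfactor, abs_mul, abs_of_pos hx]
    _ ≤ x * (1 + y / x) := by gcongr; exact abs_klFun_sub_mul_max_log_le ht
    _ = x + y := by field_simp
end
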